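/- Let K be a real m×n matrix whose Gram matrix KᵀK is invertible, and set K⁺ := (KᵀK)⁻¹Kᵀ. Let B ∈ ℝ^{m×p} and D ∈ ℝ^{r×p}, and let S := BᵀB + DᵀD − Bᵀ K K⁺ B. Consider the block matrix K̃ := [[K, B], [0, D]] ∈ ℝ^{(m+r)×(n+p)}. Then S is invertible if and only if K̃ has trivial kernel (equivalently, K̃ᵀK̃ is invertible). Moreover, when S is invertible, for any φ ∈ ℝ^m and ψ ∈ ℝ^r the unique minimizer of ‖Kc + Bμ − φ‖² + ‖Dμ − ψ‖² is given by μ = S⁻¹((Bᵀ − Bᵀ K K⁺) φ + Dᵀ ψ) and c = K⁺(φ − Bμ), i.e., the application of K̃⁺ to [φ; ψ] is computed by solving the Schur-complement system S μ = (Bᵀ − Bᵀ K K⁺) φ + Dᵀ ψ followed by a local least-squares solve. -/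
import Mathlib


open Matrix

section Helpers
variable {ι κ : Type*} [Fintype ι] [Fintype κ]

lemma ddelm_dot_self_nonneg (v : ι → ℝ) : 0 ≤ v ⬝ᵥ v :=
  Finset.sum_nonneg fun i _ => mul_self_nonneg (v i)

lemma ddelm_mv_dot (A : Matrix ι κ ℝ) (x : κ → ℝ) (y : ι → ℝ) :
    (A *ᵥ x) ⬝ᵥ y = x ⬝ᵥ (Aᵀ *ᵥ y) := by
  rw [dotProduct_comm, dotProduct_mulVec, mulVec_transpose, dotProduct_comm]

lemma ddelm_inj_sq [DecidableEq ι] (M : Matrix ι ι ℝ) (h : IsUnit M.det)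
    {x : ι → ℝ} (hx : M *ᵥ x = 0) : x = 0 := by
  have h2 : (M⁻¹ * M) *ᵥ x = 0 := by rw [← mulVec_mulVec, hx, mulVec_zero]
  rwa [Matrix.nonsing_inv_mul _ h, one_mulVec] at h2

end Helpers

/-- The least-squares objective `‖Kc + Bμ − φ‖² + ‖Dμ − ψ‖²`
(squared Euclidean norms written via dot products). -/
def ddelmObjective {m n p r : ℕ}
    (K : Matrix (Fin m) (Fin n) ℝ) (B : Matrix (Fin m) (Fin p) ℝ)
    (D : Matrix (Fin r) (Fin p) ℝ) (φ : Fin m → ℝ) (ψ : Fin r → ℝ)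
    (c : Fin n → ℝ) (μ : Fin p → ℝ) : ℝ :=
  (K *ᵥ c + B *ᵥ μ - φ) ⬝ᵥ (K *ᵥ c + B *ᵥ μ - φ)
    + (D *ᵥ μ - ψ) ⬝ᵥ (D *ᵥ μ - ψ)

/-- Let `S = BᵀB + DᵀD − BᵀKK⁺B` (with `K⁺ = (KᵀK)⁻¹Kᵀ`) and let
`K̃ = [[K, B], [0, D]]`. Then `S` is invertible iff `K̃` has trivial kernel
(equivalently, iff `K̃ᵀK̃` is invertible); and when `S` is invertible,
for any `φ`, `ψ` the unique minimizer of `‖Kc + Bμ − φ‖² + ‖Dμ − ψ‖²`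
is `μ = S⁻¹((Bᵀ − BᵀKK⁺)φ + Dᵀψ)`, `c = K⁺(φ − Bμ)`. -/
theorem ddelm_coarse_schur_solve {m n p r : ℕ}
    (K : Matrix (Fin m) (Fin n) ℝ) (B : Matrix (Fin m) (Fin p) ℝ)
    (D : Matrix (Fin r) (Fin p) ℝ)
    (hK : IsUnit (Kᵀ * K).det)
    (S : Matrix (Fin p) (Fin p) ℝ)
    (hS : S = Bᵀ * B + Dᵀ * D - Bᵀ * K * ((Kᵀ * K)⁻¹ * Kᵀ) * B)
    (Kt : Matrix (Fin m ⊕ Fin r) (Fin n ⊕ Fin p) ℝ)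
    (hKt : Kt = Matrix.fromBlocks K B 0 D) :
    (IsUnit S.det ↔ ∀ x : Fin n ⊕ Fin p → ℝ, Kt *ᵥ x = 0 → x = 0) ∧
    (IsUnit S.det ↔ IsUnit (Ktᵀ * Kt).det) ∧
    (IsUnit S.det → ∀ (φ : Fin m → ℝ) (ψ : Fin r → ℝ) (μ₀ : Fin p → ℝ) (c₀ : Fin n → ℝ),
      μ₀ = S⁻¹ *ᵥ ((Bᵀ - Bᵀ * K * ((Kᵀ * K)⁻¹ * Kᵀ)) *ᵥ φ + Dᵀ *ᵥ ψ) →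
      c₀ = ((Kᵀ * K)⁻¹ * Kᵀ) *ᵥ (φ - B *ᵥ μ₀) →
      (∀ (c' : Fin n → ℝ) (μ' : Fin p → ℝ),
          ddelmObjective K B D φ ψ c₀ μ₀ ≤ ddelmObjective K B D φ ψ c' μ') ∧
      (∀ (c : Fin n → ℝ) (μ : Fin p → ℝ),
        (∀ (c' : Fin n → ℝ) (μ' : Fin p → ℝ),
            ddelmObjective K B D φ ψ c μ ≤ ddelmObjective K B D φ ψ c' μ') →
          c = c₀ ∧ μ = μ₀)) := by
  set Kp : Matrix (Fin n) (Fin m) ℝ := (Kᵀ * K)⁻¹ * Kᵀ with hKp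
  set Q : Matrix (Fin m) (Fin m) ℝ := 1 - K * Kp with hQ
  clear_value Kp Q
  have hKpK : Kp * K = 1 := by
    rw [hKp, Matrix.mul_assoc, Matrix.nonsing_inv_mul _ hK]
  have hKtQ : Kᵀ * Q = 0 := by
    rw [hQ, Matrix.mul_sub, Matrix.mul_one, hKp, ← Matrix.mul_assoc, ← Matrix.mul_assoc,
      Matrix.mul_nonsing_inv _ hK, Matrix.one_mul, sub_self]
  have hKpQ : Kp * Q = 0 := by rw [hKp, Matrix.mul_assoc, hKtQ, Matrix.mul_zero]
  have hQK : Q * K = 0 := by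
    rw [hQ, Matrix.sub_mul, Matrix.one_mul, Matrix.mul_assoc, hKpK, Matrix.mul_one, sub_self]
  have hQT : Qᵀ = Q := by
    rw [hQ, transpose_sub, transpose_one, transpose_mul, hKp, transpose_mul,
      transpose_nonsing_inv, transpose_mul, transpose_transpose]
    simp [Matrix.mul_assoc]
  have hQQ : Q * Q = Q := by
    nth_rewrite 1 [hQ]
    rw [Matrix.sub_mul, Matrix.one_mul, Matrix.mul_assoc, hKpQ, Matrix.mul_zero, sub_zero]
  have hSQ : S = Bᵀ * Q * B + Dᵀ * D := by
    rw [hS, hQ, Matrix.mul_sub, Matrix.mul_one, Matrix.sub_mul]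
    simp [Matrix.mul_assoc]
    abel
  have hquad : ∀ v : Fin p → ℝ, v ⬝ᵥ (S *ᵥ v)
      = ((Q * B) *ᵥ v) ⬝ᵥ ((Q * B) *ᵥ v) + (D *ᵥ v) ⬝ᵥ (D *ᵥ v) := by
    intro v
    have h1 : (Q * B)ᵀ * (Q * B) = Bᵀ * Q * B := by
      rw [transpose_mul, Matrix.mul_assoc, ← Matrix.mul_assoc Qᵀ Q B, hQT, hQQ,
        ← Matrix.mul_assoc]
    rw [ddelm_mv_dot (Q * B), mulVec_mulVec, ddelm_mv_dot D, mulVec_mulVec,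
      ← dotProduct_add, ← add_mulVec, h1, hSQ]
  -- S v = 0 from (Q*B)v = 0 and Dv = 0
  have hSv0 : ∀ v : Fin p → ℝ, (Q * B) *ᵥ v = 0 → D *ᵥ v = 0 → S *ᵥ v = 0 := by
    intro v h1 h2
    rw [hSQ, add_mulVec, Matrix.mul_assoc, ← mulVec_mulVec, h1, mulVec_zero,
      ← mulVec_mulVec, h2, mulVec_zero, add_zero]
  -- K injective
  have hKinj : ∀ c : Fin n → ℝ, K *ᵥ c = 0 → c = 0 := by
    intro c hc
    have : (Kp * K) *ᵥ c = 0 := by rw [← mulVec_mulVec, hc, mulVec_zero]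
    rwa [hKpK, one_mulVec] at this
  -- kernel triviality
  have iff1 : IsUnit S.det ↔ ∀ x : Fin n ⊕ Fin p → ℝ, Kt *ᵥ x = 0 → x = 0 := by
    constructor
    · intro hSu x hx
      rw [hKt, fromBlocks_mulVec] at hx
      have h1 : K *ᵥ (x ∘ Sum.inl) + B *ᵥ (x ∘ Sum.inr) = 0 :=
        funext fun i => congrFun hx (Sum.inl i)
      have h2 : D *ᵥ (x ∘ Sum.inr) = 0 := by
        have := funext fun i => congrFun hx (Sum.inr i)
        rwa [zero_mulVec, zero_add] at this
      have h3 : (Q * B) *ᵥ (x ∘ Sum.inr) = 0 := by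
        have := congrArg (fun y => Q *ᵥ y) h1
        simp only [mulVec_add, mulVec_zero, mulVec_mulVec, hQK, zero_mulVec, zero_add] at this
        exact this
      have hμ : (x ∘ Sum.inr) = 0 := ddelm_inj_sq S hSu (hSv0 _ h3 h2)
      have hc : (x ∘ Sum.inl) = 0 := by
        apply hKinj
        have := h1
        rw [hμ, mulVec_zero, add_zero] at this
        exact this
      funext i
      cases i with
      | inl a => exact congrFun hc a
      | inr a => exact congrFun hμ a
    · intro hker
      by_contra h
      have hdet : S.det = 0 := by
        by_contra h0
        exact h (isUnit_iff_ne_zero.mpr h0)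
      obtain ⟨v, hv0, hSv⟩ := exists_mulVec_eq_zero_iff.mpr hdet
      have hq : ((Q * B) *ᵥ v) ⬝ᵥ ((Q * B) *ᵥ v) + (D *ᵥ v) ⬝ᵥ (D *ᵥ v) = 0 := by
        rw [← hquad, hSv, dotProduct_zero]
      have n1 := ddelm_dot_self_nonneg ((Q * B) *ᵥ v)
      have n2 := ddelm_dot_self_nonneg (D *ᵥ v)
      have e1 : (Q * B) *ᵥ v = 0 := dotProduct_self_eq_zero.mp (by linarith)
      have e2 : D *ᵥ v = 0 := dotProduct_self_eq_zero.mp (by linarith)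
      set x : Fin n ⊕ Fin p → ℝ := Sum.elim (-(Kp *ᵥ (B *ᵥ v))) v with hx
      have hz : Q *ᵥ (B *ᵥ v) = 0 := by rw [mulVec_mulVec]; exact e1
      have hz2 : -((K * Kp) *ᵥ (B *ᵥ v)) + B *ᵥ v = 0 := by
        rw [hQ, sub_mulVec, one_mulVec] at hz
        rw [neg_add_eq_sub]
        exact hz
      have hKx : Kt *ᵥ x = 0 := by
        rw [hKt, fromBlocks_mulVec,
          show x ∘ Sum.inl = -(Kp *ᵥ (B *ᵥ v)) from rfl, show x ∘ Sum.inr = v from rfl,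
          zero_mulVec, zero_add, e2, mulVec_neg, mulVec_mulVec, hz2]
        funext i
        cases i <;> rfl
      have hx0 := hker x hKx
      apply hv0
      funext i
      exact congrFun (congrArg (fun y => y ∘ Sum.inr) hx0) i
  have iff2 : IsUnit S.det ↔ IsUnit (Ktᵀ * Kt).det := by
    rw [iff1]
    constructor
    · intro hker
      by_contra h
      have hdet : (Ktᵀ * Kt).det = 0 := by
        by_contra h0
        exact h (isUnit_iff_ne_zero.mpr h0)
      obtain ⟨v, hv0, hv⟩ := exists_mulVec_eq_zero_iff.mpr hdet
      have hz : (Kt *ᵥ v) ⬝ᵥ (Kt *ᵥ v) = 0 := by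
        rw [ddelm_mv_dot, mulVec_mulVec, hv, dotProduct_zero]
      exact hv0 (hker v (dotProduct_self_eq_zero.mp hz))
    · intro hu x hx
      apply ddelm_inj_sq _ hu
      rw [← mulVec_mulVec, hx, mulVec_zero]
  refine ⟨iff1, iff2, ?_⟩
  intro hSu φ ψ μ₀ c₀ hμ₀ hc₀
  have hBQ : Bᵀ - Bᵀ * K * Kp = Bᵀ * Q := by
    rw [hQ, Matrix.mul_sub, Matrix.mul_one, ← Matrix.mul_assoc]
  have hSμ₀ : S *ᵥ μ₀ = (Bᵀ * Q) *ᵥ φ + Dᵀ *ᵥ ψ := by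
    rw [hμ₀, mulVec_mulVec, Matrix.mul_nonsing_inv _ hSu, one_mulVec, hBQ]
  have F1 : ∀ (c : Fin n → ℝ) (μ : Fin p → ℝ),
      K *ᵥ c + B *ᵥ μ - φ = K *ᵥ (c - Kp *ᵥ (φ - B *ᵥ μ)) + Q *ᵥ (B *ᵥ μ - φ) := by
    intro c μ
    simp only [hQ, sub_mulVec, one_mulVec, ← mulVec_mulVec, mulVec_sub]
    abel
  have F4 : ∀ (a : Fin n → ℝ) (y : Fin m → ℝ), (K *ᵥ a) ⬝ᵥ (Q *ᵥ y) = 0 := by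
    intro a y
    rw [ddelm_mv_dot, mulVec_mulVec, hKtQ, zero_mulVec, dotProduct_zero]
  have F5 : ∀ v : Fin p → ℝ,
      ((Q * B) *ᵥ v) ⬝ᵥ (Q *ᵥ (B *ᵥ μ₀ - φ)) + (D *ᵥ v) ⬝ᵥ (D *ᵥ μ₀ - ψ) = 0 := by
    intro v
    rw [ddelm_mv_dot, ddelm_mv_dot, mulVec_mulVec, ← dotProduct_add]
    have h7 : (Q * B)ᵀ * Q = Bᵀ * Q := by
      rw [transpose_mul, hQT, Matrix.mul_assoc, hQQ]
    have h8 := hSμ₀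
    rw [hSQ, add_mulVec] at h8
    have h9 : ((Q * B)ᵀ * Q) *ᵥ (B *ᵥ μ₀ - φ) + Dᵀ *ᵥ (D *ᵥ μ₀ - ψ) = 0 := by
      rw [h7, mulVec_sub, mulVec_sub, mulVec_mulVec, mulVec_mulVec, Matrix.mul_assoc]
      rw [Matrix.mul_assoc] at h8
      linear_combination h8
    rw [h9, dotProduct_zero]
  have F6 : ddelmObjective K B D φ ψ c₀ μ₀
      = (Q *ᵥ (B *ᵥ μ₀ - φ)) ⬝ᵥ (Q *ᵥ (B *ᵥ μ₀ - φ)) + (D *ᵥ μ₀ - ψ) ⬝ᵥ (D *ᵥ μ₀ - ψ) := by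
    have h0 : K *ᵥ c₀ + B *ᵥ μ₀ - φ = Q *ᵥ (B *ᵥ μ₀ - φ) := by
      rw [F1 c₀ μ₀, hc₀, sub_self, mulVec_zero, zero_add]
    simp only [ddelmObjective, h0]
  have master : ∀ (c : Fin n → ℝ) (μ : Fin p → ℝ),
      ddelmObjective K B D φ ψ c μ = ddelmObjective K B D φ ψ c₀ μ₀
        + (K *ᵥ (c - Kp *ᵥ (φ - B *ᵥ μ))) ⬝ᵥ (K *ᵥ (c - Kp *ᵥ (φ - B *ᵥ μ)))
        + ((Q * B) *ᵥ (μ - μ₀)) ⬝ᵥ ((Q * B) *ᵥ (μ - μ₀))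
        + (D *ᵥ (μ - μ₀)) ⬝ᵥ (D *ᵥ (μ - μ₀)) := by
    intro c μ
    set u := K *ᵥ (c - Kp *ᵥ (φ - B *ᵥ μ)) with hu
    set w₀ := Q *ᵥ (B *ᵥ μ₀ - φ) with hw₀
    set e₀ := D *ᵥ μ₀ - ψ with he₀
    set qv := (Q * B) *ᵥ (μ - μ₀) with hqv
    set dv := D *ᵥ (μ - μ₀) with hdv
    have hw : Q *ᵥ (B *ᵥ μ - φ) = w₀ + qv := by
      rw [hw₀, hqv, ← mulVec_mulVec, mulVec_sub Q, mulVec_sub Q, mulVec_sub B, mulVec_sub Q]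
      abel
    have he : D *ᵥ μ - ψ = e₀ + dv := by
      rw [he₀, hdv, mulVec_sub]
      abel
    have hdc : K *ᵥ c + B *ᵥ μ - φ = u + (w₀ + qv) := by
      rw [← hw, hu]
      exact F1 c μ
    have hu1 : u ⬝ᵥ w₀ = 0 := F4 _ _
    have hu2 : u ⬝ᵥ qv = 0 := by
      rw [hqv, ← mulVec_mulVec]
      exact F4 _ _
    have hcross : qv ⬝ᵥ w₀ + dv ⬝ᵥ e₀ = 0 := F5 (μ - μ₀)
    have c1 : w₀ ⬝ᵥ u = 0 := by rw [dotProduct_comm]; exact hu1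
    have c2 : qv ⬝ᵥ u = 0 := by rw [dotProduct_comm]; exact hu2
    have c3 : w₀ ⬝ᵥ qv = qv ⬝ᵥ w₀ := dotProduct_comm _ _
    have c4 : e₀ ⬝ᵥ dv = dv ⬝ᵥ e₀ := dotProduct_comm _ _
    rw [F6]
    simp only [ddelmObjective]
    rw [hdc, he]
    simp only [dotProduct_add, add_dotProduct]
    linarith
  constructor
  · intro c' μ'
    rw [master c' μ']
    have n1 := ddelm_dot_self_nonneg (K *ᵥ (c' - Kp *ᵥ (φ - B *ᵥ μ')))
    have n2 := ddelm_dot_self_nonneg ((Q * B) *ᵥ (μ' - μ₀))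
    have n3 := ddelm_dot_self_nonneg (D *ᵥ (μ' - μ₀))
    linarith
  · intro c μ hmin
    have hle := hmin c₀ μ₀
    rw [master c μ] at hle
    have n1 := ddelm_dot_self_nonneg (K *ᵥ (c - Kp *ᵥ (φ - B *ᵥ μ)))
    have n2 := ddelm_dot_self_nonneg ((Q * B) *ᵥ (μ - μ₀))
    have n3 := ddelm_dot_self_nonneg (D *ᵥ (μ - μ₀))
    have e2 : (Q * B) *ᵥ (μ - μ₀) = 0 := dotProduct_self_eq_zero.mp (by linarith)
    have e3 : D *ᵥ (μ - μ₀) = 0 := dotProduct_self_eq_zero.mp (by linarith)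
    have e1 : K *ᵥ (c - Kp *ᵥ (φ - B *ᵥ μ)) = 0 := dotProduct_self_eq_zero.mp (by linarith)
    have hμ : μ = μ₀ :=
      sub_eq_zero.mp (ddelm_inj_sq S hSu (hSv0 _ e2 e3))
    have hc : c = c₀ := by
      have h9 := hKinj _ e1
      rw [hμ, ← hc₀] at h9
      exact sub_eq_zero.mp h9
    exact ⟨hc, hμ⟩
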